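/- Let E be a real Banach space and S : E ⇉ E* a multifunction such that gra S is a norm-closed, r_L-dense, monotone subset of E × E*. Then S is maximally monotone, i.e. gra S = (gra S)^μ. -/

import Mathlib

/-- `r_L(x, x*) = ½‖x‖² + ½‖x*‖² + ⟨x, x*⟩`. -/
noncomputable def rL {E : Type*} [NormedAddCommGroup E] [NormedSpace ℝ E]
    (x : E) (x' : StrongDual ℝ E) : ℝ :=
  1 / 2 * ‖x‖ ^ 2 + 1 / 2 * ‖x'‖ ^ 2 + x' x

/-- `A ⊆ E × E*` is `r_L`-dense: for every `(y, y*)`,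
`inf_{(s,s*) ∈ A} r_L(s - y, s* - y*) = 0` (since `r_L ≥ 0`, this means for every
`ε > 0` there is `(s, s*) ∈ A` with `r_L(s - y, s* - y*) < ε`). -/
def RLDense {E : Type*} [NormedAddCommGroup E] [NormedSpace ℝ E]
    (A : Set (E × StrongDual ℝ E)) : Prop :=
  ∀ (y : E) (y' : StrongDual ℝ E), ∀ ε > (0 : ℝ),
    ∃ p ∈ A, rL (p.1 - y) (p.2 - y') < ε

/-- The monotone polar `A^μ` of `A ⊆ E × E*`. -/
def monoPolar {E : Type*} [NormedAddCommGroup E] [NormedSpace ℝ E]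
    (A : Set (E × StrongDual ℝ E)) : Set (E × StrongDual ℝ E) :=
  {p | ∀ q ∈ A, 0 ≤ (q.2 - p.2) (q.1 - p.1)}

/-!
A point `p` of the monotone polar of an `r_L`-dense set `A` pairs nonnegatively with every
`q - p`, `q ∈ A`; on such pairs `r_L` dominates half the squared product norm, so `r_L`-density
puts points of `A` arbitrarily close to `p`. Thus `A^μ ⊆ closure A`, and for a closed monotone
`A` this gives `A^μ ⊆ A ⊆ A^μ`.
-/

section

variable {E : Type*} [NormedAddCommGroup E] [NormedSpace ℝ E]

theorem norm_prod_sq_le_two_mul_rL {x : E} {x' : StrongDual ℝ E} (h : 0 ≤ x' x) :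
    ‖(x, x')‖ ^ 2 ≤ 2 * rL x x' := by
  rw [Prod.norm_def, rL]
  rcases le_total ‖x‖ ‖x'‖ with hle | hle
  · rw [max_eq_right hle]; nlinarith [sq_nonneg ‖x‖]
  · rw [max_eq_left hle]; nlinarith [sq_nonneg ‖x'‖]

theorem monoPolar_subset_closure_of_rLDense {A : Set (E × StrongDual ℝ E)} (hA : RLDense A) :
    monoPolar A ⊆ closure A := by
  intro p hp
  rw [Metric.mem_closure_iff]
  intro ε hε
  obtain ⟨q, hqA, hq⟩ := hA p.1 p.2 (ε ^ 2 / 2) (by positivity)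
  refine ⟨q, hqA, lt_of_pow_lt_pow_left₀ 2 hε.le ?_⟩
  calc dist p q ^ 2 = ‖(q.1 - p.1, q.2 - p.2)‖ ^ 2 := by rw [dist_comm, dist_eq_norm]; rfl
    _ ≤ 2 * rL (q.1 - p.1) (q.2 - p.2) := norm_prod_sq_le_two_mul_rL (hp q hqA)
    _ < ε ^ 2 := by linarith

end

theorem stmt14_general {E : Type*} [NormedAddCommGroup E] [NormedSpace ℝ E]
    (S : E → Set (StrongDual ℝ E))
    (hclosed : IsClosed {p : E × StrongDual ℝ E | p.2 ∈ S p.1})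
    (hdense : RLDense {p : E × StrongDual ℝ E | p.2 ∈ S p.1})
    (hmono : {p : E × StrongDual ℝ E | p.2 ∈ S p.1} ⊆
      monoPolar {p : E × StrongDual ℝ E | p.2 ∈ S p.1}) :
    {p : E × StrongDual ℝ E | p.2 ∈ S p.1} =
      monoPolar {p : E × StrongDual ℝ E | p.2 ∈ S p.1} :=
  hmono.antisymm ((monoPolar_subset_closure_of_rLDense hdense).trans hclosed.closure_subset)

theorem stmt14 {E : Type*} [NormedAddCommGroup E] [NormedSpace ℝ E] [CompleteSpace E]
    (S : E → Set (StrongDual ℝ E))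
    (hclosed : IsClosed {p : E × StrongDual ℝ E | p.2 ∈ S p.1})
    (hdense : RLDense {p : E × StrongDual ℝ E | p.2 ∈ S p.1})
    (hmono : {p : E × StrongDual ℝ E | p.2 ∈ S p.1} ⊆
      monoPolar {p : E × StrongDual ℝ E | p.2 ∈ S p.1}) :
    {p : E × StrongDual ℝ E | p.2 ∈ S p.1} =
      monoPolar {p : E × StrongDual ℝ E | p.2 ∈ S p.1} :=
  stmt14_general S hclosed hdense hmono
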